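/- (Rule of Circling) Let A and B be the z-matrix and w-matrix of a singular sequence. Then for any 1 ≤ i < j ≤ n, a_{ij}(b_{ii} + b_{jj}) ≠ 1 and b_{ij}(a_{ii} + a_{jj}) ≠ 1. -/

import Mathlib

open Filter Finset

/-- `Zq δ z k l` is the quantity `Z_{lk} = δ_{kl}^3 · (z_k − z_l)`
(and, applied to `w`, the quantity `W_{lk}`). -/
noncomputable def Zq {n : ℕ} (δ : Fin n → Fin n → ℂ) (z : Fin n → ℂ) (k l : Fin n) : ℂ :=
  δ k l ^ 3 * (z k - z l)

/-- A singular sequence of normalized central configurations for the masses `m`: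
sequences `z^{(N)}, w^{(N)} ∈ ℂ^n`, symmetric `δ^{(N)}`, and positive reals `ε_N → 0`
such that every term satisfies the central configuration equations
`z_k = ∑_{l≠k} m_l Z_{lk}`, `w_k = ∑_{l≠k} m_l W_{lk}`, the normalization
`δ_{kl}^2 z_{kl} w_{kl} = 1` (`k ≠ l`), the maximum of the `|z_k|, |Z_{kl}|`
(resp. `|w_k|, |W_{kl}|`) equals `ε_N^{-2}`, and all the sequences
`ε_N^2 z_k, ε_N^2 w_k, ε_N^2 Z_{kl}, ε_N^2 W_{kl}` converge. -/
structure SingularSeq (n : ℕ) (m : Fin n → ℂ) : Type where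
  z : ℕ → Fin n → ℂ
  w : ℕ → Fin n → ℂ
  delta : ℕ → Fin n → Fin n → ℂ
  eps : ℕ → ℝ
  eps_pos : ∀ N, 0 < eps N
  eps_lim : Tendsto eps atTop (nhds 0)
  delta_symm : ∀ N, ∀ k l : Fin n, delta N k l = delta N l k
  eq_z : ∀ N, ∀ k : Fin n, z N k = ∑ l ∈ univ.erase k, m l * Zq (delta N) (z N) k l
  eq_w : ∀ N, ∀ k : Fin n, w N k = ∑ l ∈ univ.erase k, m l * Zq (delta N) (w N) k l
  normalize : ∀ N, ∀ k l : Fin n, k ≠ l →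
    delta N k l ^ 2 * (z N l - z N k) * (w N l - w N k) = 1
  maxZ : ∀ N, IsGreatest
      ({x : ℝ | ∃ k, x = ‖z N k‖} ∪
        {x : ℝ | ∃ k l, k ≠ l ∧ x = ‖Zq (delta N) (z N) k l‖})
      (eps N ^ (-2 : ℤ))
  maxW : ∀ N, IsGreatest
      ({x : ℝ | ∃ k, x = ‖w N k‖} ∪
        {x : ℝ | ∃ k l, k ≠ l ∧ x = ‖Zq (delta N) (w N) k l‖})
      (eps N ^ (-2 : ℤ))
  conv_z : ∀ k : Fin n, ∃ L : ℂ,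
    Tendsto (fun N => (eps N : ℂ) ^ 2 * z N k) atTop (nhds L)
  conv_w : ∀ k : Fin n, ∃ L : ℂ,
    Tendsto (fun N => (eps N : ℂ) ^ 2 * w N k) atTop (nhds L)
  conv_Z : ∀ k l : Fin n, k ≠ l → ∃ L : ℂ,
    Tendsto (fun N => (eps N : ℂ) ^ 2 * Zq (delta N) (z N) k l) atTop (nhds L)
  conv_W : ∀ k l : Fin n, k ≠ l → ∃ L : ℂ,
    Tendsto (fun N => (eps N : ℂ) ^ 2 * Zq (delta N) (w N) k l) atTop (nhds L)

/-- `A` and `B` are the z-matrix and the w-matrix of the singular sequence `S`: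
symmetric `{0,1}`-matrices whose entries record which of the (convergent) sequences
`ε_N^2 z_i`, `ε_N^2 Z_{ij}` (resp. `ε_N^2 w_i`, `ε_N^2 W_{ij}`) have nonzero limit. -/
structure IsZWMatrices {n : ℕ} {m : Fin n → ℂ} (S : SingularSeq n m)
    (A B : Matrix (Fin n) (Fin n) ℕ) : Prop where
  zeroOne_A : ∀ i j, A i j = 0 ∨ A i j = 1
  symm_A : ∀ i j, A i j = A j i
  zeroOne_B : ∀ i j, B i j = 0 ∨ B i j = 1
  symm_B : ∀ i j, B i j = B j i
  diag_A : ∀ i, A i i = 1 ↔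
    ¬ Tendsto (fun N => (S.eps N : ℂ) ^ 2 * S.z N i) atTop (nhds 0)
  off_A : ∀ i j, i ≠ j → (A i j = 1 ↔
    ¬ Tendsto (fun N => (S.eps N : ℂ) ^ 2 * Zq (S.delta N) (S.z N) i j) atTop (nhds 0))
  diag_B : ∀ i, B i i = 1 ↔
    ¬ Tendsto (fun N => (S.eps N : ℂ) ^ 2 * S.w N i) atTop (nhds 0)
  off_B : ∀ i j, i ≠ j → (B i j = 1 ↔
    ¬ Tendsto (fun N => (S.eps N : ℂ) ^ 2 * Zq (S.delta N) (S.w N) i j) atTop (nhds 0))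

/-!
If `ε² Z_{ij}` has a nonzero limit, then `ε² (w_i − w_j) → 0`: the normalization gives
`Z_{ij} (w_i − w_j) = δ_{ij}` and `Z_{ij} W_{ij} = δ_{ij}⁴`, so `|δ_{ij}| ≤ ε⁻¹` and
`ε² (w_i − w_j) · ε² Z_{ij} = ε⁴ δ_{ij} = O(ε³)`. Hence `ε² w_i` and `ε² w_j` are simultaneously
null or not, i.e. `b_{ii} = b_{jj}`, and `a_{ij} (b_{ii} + b_{jj})` is `0` or `2 a_{ij}`.
The other half follows by exchanging the roles of `z` and `w`.
-/

open Topology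

lemma tendsto_zero_of_mul_tendsto_zero {𝕜 ι : Type*} [NormedField 𝕜] {l : Filter ι}
    {f g : ι → 𝕜} {L : 𝕜} (hf : Tendsto f l (𝓝 L)) (hL : L ≠ 0)
    (hgf : Tendsto (fun x => g x * f x) l (𝓝 0)) :
    Tendsto g l (𝓝 0) := by
  have hquot : Tendsto (fun x => g x * f x / f x) l (𝓝 0) := by
    rw [← zero_div L]
    exact hgf.div hf hL
  refine hquot.congr' ?_
  filter_upwards [hf.eventually_ne hL] with x hx
  exact mul_div_cancel_right₀ _ hx

lemma tendsto_zero_iff_of_sub_tendsto_zero {G ι : Type*} [TopologicalSpace G] [AddCommGroup G]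
    [IsTopologicalAddGroup G] {l : Filter ι} {f g : ι → G}
    (hfg : Tendsto (fun x => f x - g x) l (𝓝 0)) :
    Tendsto f l (𝓝 0) ↔ Tendsto g l (𝓝 0) := by
  constructor
  · intro hf
    simpa only [sub_sub_cancel, sub_zero] using hf.sub hfg
  · intro hg
    simpa only [sub_add_cancel, add_zero] using hfg.add hg

section Zq

variable {n : ℕ} {δ : Fin n → Fin n → ℂ} {z w : Fin n → ℂ} {i j : Fin n}

lemma Zq_mul_Zq (h : δ i j ^ 2 * (z j - z i) * (w j - w i) = 1) :
    Zq δ z i j * Zq δ w i j = δ i j ^ 4 := by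
  unfold Zq
  linear_combination δ i j ^ 4 * h

lemma Zq_mul_sub (h : δ i j ^ 2 * (z j - z i) * (w j - w i) = 1) :
    Zq δ z i j * (w i - w j) = δ i j := by
  unfold Zq
  linear_combination δ i j * h

end Zq

namespace SingularSeq

variable {n : ℕ} {m : Fin n → ℂ}

def swap (S : SingularSeq n m) : SingularSeq n m where
  z := S.w
  w := S.z
  delta := S.delta
  eps := S.eps
  eps_pos := S.eps_pos
  eps_lim := S.eps_lim
  delta_symm := S.delta_symm
  eq_z := S.eq_w
  eq_w := S.eq_z
  normalize N k l hkl := by rw [mul_right_comm]; exact S.normalize N k l hkl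
  maxZ := S.maxW
  maxW := S.maxZ
  conv_z := S.conv_w
  conv_w := S.conv_z
  conv_Z := S.conv_W
  conv_W := S.conv_Z

variable (S : SingularSeq n m) {i j : Fin n}

lemma norm_Zq_z_le (hij : i ≠ j) (N : ℕ) :
    ‖Zq (S.delta N) (S.z N) i j‖ ≤ S.eps N ^ (-2 : ℤ) :=
  (S.maxZ N).2 (Or.inr ⟨i, j, hij, rfl⟩)

lemma norm_delta_le (hij : i ≠ j) (N : ℕ) : ‖S.delta N i j‖ ≤ (S.eps N)⁻¹ := by
  have hε := (S.eps_pos N).le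
  have hW : ‖Zq (S.delta N) (S.w N) i j‖ ≤ S.eps N ^ (-2 : ℤ) := S.swap.norm_Zq_z_le hij N
  have h4 : ‖S.delta N i j‖ ^ 4 ≤ (S.eps N)⁻¹ ^ 4 :=
    calc ‖S.delta N i j‖ ^ 4
        = ‖Zq (S.delta N) (S.z N) i j‖ * ‖Zq (S.delta N) (S.w N) i j‖ := by
          rw [← norm_mul, Zq_mul_Zq (S.normalize N i j hij), norm_pow]
      _ ≤ S.eps N ^ (-2 : ℤ) * S.eps N ^ (-2 : ℤ) :=
          mul_le_mul (S.norm_Zq_z_le hij N) hW (norm_nonneg _) (zpow_nonneg hε _)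
      _ = (S.eps N)⁻¹ ^ 4 := by rw [← zpow_add₀ (S.eps_pos N).ne']; simp [inv_pow]
  exact (pow_le_pow_iff_left₀ (norm_nonneg _) (inv_nonneg.2 hε) (by norm_num)).1 h4

lemma tendsto_sub_w_mul_Zq_z (hij : i ≠ j) :
    Tendsto (fun N => (S.eps N : ℂ) ^ 2 * (S.w N i - S.w N j) *
      ((S.eps N : ℂ) ^ 2 * Zq (S.delta N) (S.z N) i j)) atTop (𝓝 0) := by
  have hε3 : Tendsto (fun N => S.eps N ^ 3) atTop (𝓝 0) := by
    simpa using S.eps_lim.pow 3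
  refine squeeze_zero_norm (fun N => ?_) hε3
  have hε := S.eps_pos N
  calc ‖(S.eps N : ℂ) ^ 2 * (S.w N i - S.w N j) * ((S.eps N : ℂ) ^ 2 * Zq (S.delta N) (S.z N) i j)‖
      = S.eps N ^ 4 * ‖S.delta N i j‖ := by
        rw [mul_mul_mul_comm, ← pow_add, mul_comm (S.w N i - S.w N j),
          Zq_mul_sub (S.normalize N i j hij), norm_mul, norm_pow, Complex.norm_real,
          Real.norm_of_nonneg hε.le]
    _ ≤ S.eps N ^ 4 * (S.eps N)⁻¹ := by gcongr; exact S.norm_delta_le hij N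
    _ = S.eps N ^ 3 := by field_simp

lemma tendsto_sub_w_of_not_tendsto_Zq_z (hij : i ≠ j)
    (hZ : ¬ Tendsto (fun N => (S.eps N : ℂ) ^ 2 * Zq (S.delta N) (S.z N) i j) atTop (𝓝 0)) :
    Tendsto (fun N => (S.eps N : ℂ) ^ 2 * S.w N i - (S.eps N : ℂ) ^ 2 * S.w N j)
      atTop (𝓝 0) := by
  obtain ⟨L, hL⟩ := S.conv_Z i j hij
  have hL0 : L ≠ 0 := by
    rintro rfl
    exact hZ hL
  simpa only [mul_sub] using tendsto_zero_of_mul_tendsto_zero hL hL0 (S.tendsto_sub_w_mul_Zq_z hij)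

end SingularSeq

namespace IsZWMatrices

variable {n : ℕ} {m : Fin n → ℂ} {S : SingularSeq n m} {A B : Matrix (Fin n) (Fin n) ℕ}

lemma swap (hAB : IsZWMatrices S A B) : IsZWMatrices S.swap B A where
  zeroOne_A := hAB.zeroOne_B
  symm_A := hAB.symm_B
  zeroOne_B := hAB.zeroOne_A
  symm_B := hAB.symm_A
  diag_A := hAB.diag_B
  off_A := hAB.off_B
  diag_B := hAB.diag_A
  off_B := hAB.off_A

lemma diag_B_eq_of_A_eq_one (hAB : IsZWMatrices S A B) {i j : Fin n} (hij : i ≠ j)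
    (hA : A i j = 1) : B i i = B j j := by
  have hw := tendsto_zero_iff_of_sub_tendsto_zero
    (S.tendsto_sub_w_of_not_tendsto_Zq_z hij ((hAB.off_A i j hij).1 hA))
  have hB : B i i = 1 ↔ B j j = 1 := by
    rw [hAB.diag_B, hAB.diag_B, hw]
  rcases hAB.zeroOne_B i i with hi | hi <;> rcases hAB.zeroOne_B j j with hj | hj <;>
    simp_all

lemma A_mul_add_diag_B_ne_one (hAB : IsZWMatrices S A B) {i j : Fin n} (hij : i ≠ j) :
    A i j * (B i i + B j j) ≠ 1 := by
  rcases hAB.zeroOne_A i j with hA | hA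
  · simp [hA]
  · rw [hAB.diag_B_eq_of_A_eq_one hij hA, hA]
    omega

end IsZWMatrices

theorem rule_of_circling_general (n : ℕ) (m : Fin n → ℂ)
    (S : SingularSeq n m) (A B : Matrix (Fin n) (Fin n) ℕ)
    (hAB : IsZWMatrices S A B) :
    ∀ i j : Fin n, i < j →
      A i j * (B i i + B j j) ≠ 1 ∧ B i j * (A i i + A j j) ≠ 1 :=
  fun _ _ hij => ⟨hAB.A_mul_add_diag_B_ne_one hij.ne, hAB.swap.A_mul_add_diag_B_ne_one hij.ne⟩

theorem rule_of_circling (n : ℕ) (hn : 2 ≤ n) (m : Fin n → ℂ)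
    (hm : ∀ I : Finset (Fin n), I.Nonempty → ∑ k ∈ I, m k ≠ 0)
    (S : SingularSeq n m) (A B : Matrix (Fin n) (Fin n) ℕ)
    (hAB : IsZWMatrices S A B) :
    ∀ i j : Fin n, i < j →
      A i j * (B i i + B j j) ≠ 1 ∧ B i j * (A i i + A j j) ≠ 1 :=
  rule_of_circling_general n m S A B hAB
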